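/- Let ℓ ∈ ℕ. Let N be the (2ℓ+1)×(2ℓ+1) complex matrix whose rows and columns are indexed by m, n ∈ {−ℓ, −ℓ+1, …, ℓ}, with (m,n) entry equal to (i/2)·(ℓ+n) if m = n−1, (i/2)·(−2n) if m = n, (i/2)·(−(ℓ−n)) if m = n+1, and 0 otherwise. Then N^{2ℓ+1} = 0; that is, N is nilpotent. -/
import Mathlib

noncomputable section

/-- The matrix of the generator `N₋` on the `(2ℓ+1)`-dimensional invariant subspace `V_ℓ⁰`,
with rows and columns indexed by `m, n ∈ {-ℓ, …, ℓ}` (encoded as `Fin (2ℓ+1)` via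
`m = i - ℓ`):  the `(m,n)` entry is `(i/2)(ℓ+n)` if `m = n-1`, `(i/2)(-2n)` if `m = n`,
`(i/2)(-(ℓ-n))` if `m = n+1`, and `0` otherwise.  -/
def NminusMat (ℓ : ℕ) : Matrix (Fin (2 * ℓ + 1)) (Fin (2 * ℓ + 1)) ℂ :=
  fun i j =>
    let m : ℤ := (i : ℤ) - ℓ
    let n : ℤ := (j : ℤ) - ℓ
    if m = n - 1 then (Complex.I / 2) * ((ℓ : ℂ) + (n : ℂ))
    else if m = n then (Complex.I / 2) * (-2 * (n : ℂ))
    else if m = n + 1 then (Complex.I / 2) * (-((ℓ : ℂ) - (n : ℂ)))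
    else 0

namespace Stmt10Aux

/-- choose identity in ℂ: `(m+1) C(k,m+1) = (k-m) C(k,m)`. -/
lemma choose_cast_id (k m : ℕ) :
    ((m : ℂ) + 1) * (k.choose (m + 1)) = ((k : ℂ) - m) * (k.choose m) := by
  rcases le_or_gt (m + 1) k with h | h
  · have hn := Nat.choose_succ_right_eq k m
    have hm : m ≤ k := le_trans (Nat.le_succ m) h
    have : ((k.choose (m+1) * (m+1) : ℕ) : ℂ) = ((k.choose m * (k - m) : ℕ) : ℂ) := by
      exact_mod_cast congrArg (Nat.cast (R := ℂ)) hn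
    push_cast [Nat.cast_sub hm] at this
    linear_combination this
  · have h1 : k.choose (m + 1) = 0 := Nat.choose_eq_zero_of_lt h
    rcases lt_or_ge k m with h2 | h2
    · have h3 : k.choose m = 0 := Nat.choose_eq_zero_of_lt h2
      simp [h1, h3]
    · have : k = m := le_antisymm (Nat.lt_succ_iff.mp h) h2
      subst this
      simp [h1]

/-- the key three-term identity. -/
lemma key (N k m : ℕ) :
    ((m : ℂ) - N) * (k.choose m) + (2 * m + 2 - N) * (k.choose (m + 1))
      + ((m : ℂ) + 2) * (k.choose (m + 2)) = ((k : ℂ) - N) * ((k + 1).choose (m + 1)) := by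
  have ha := choose_cast_id k (m + 1)
  have hb := choose_cast_id k m
  have hc : (((k + 1).choose (m + 1) : ℕ) : ℂ) = (k.choose m : ℂ) + (k.choose (m + 1) : ℂ) := by
    rw [Nat.choose_succ_succ]
    push_cast
    ring
  push_cast at ha hb hc ⊢
  linear_combination ha + hb - ((k : ℂ) - N) * hc

/-- entry functions on ℕ -/
def mEnt (N i j : ℕ) : ℂ :=
  if j = i + 1 then (j : ℂ)
  else if i = j then (N : ℂ) - 2 * i
  else if i = j + 1 then (i : ℂ) - 1 - N
  else 0

def pEnt (i j : ℕ) : ℂ := (-1 : ℂ) ^ (i + j) * (j.choose i)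

def sEnt (N i j : ℕ) : ℂ := if i = j + 1 then (j : ℂ) - N else 0

def Mmat (N : ℕ) : Matrix (Fin (N + 1)) (Fin (N + 1)) ℂ := fun i j => mEnt N i j
def Pmat (N : ℕ) : Matrix (Fin (N + 1)) (Fin (N + 1)) ℂ := fun i j => pEnt i j
def Smat (N : ℕ) : Matrix (Fin (N + 1)) (Fin (N + 1)) ℂ := fun i j => sEnt N i j

lemma mEnt_split (N i j : ℕ) :
    mEnt N i j = (if j = i + 1 then (j : ℂ) else 0) + (if j = i then (N : ℂ) - 2 * i else 0)
      + (if i = j + 1 then (i : ℂ) - 1 - N else 0) := by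
  unfold mEnt
  split_ifs <;> first | ring1 | (exfalso; omega)

lemma main_identity (N : ℕ) : Mmat N * Pmat N = Pmat N * Smat N := by
  funext i k
  have hik : (k : ℕ) ≤ N := Nat.lt_succ_iff.mp k.isLt
  have hii : (i : ℕ) ≤ N := Nat.lt_succ_iff.mp i.isLt
  rw [Matrix.mul_apply, Matrix.mul_apply]
  show (∑ j : Fin (N+1), mEnt N i j * pEnt j k) = ∑ j : Fin (N+1), pEnt i j * sEnt N j k
  rw [Fin.sum_univ_eq_sum_range (fun j => mEnt N i j * pEnt j k) (N+1),
      Fin.sum_univ_eq_sum_range (fun j => pEnt (i : ℕ) j * sEnt N j k) (N+1)]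
  have hL : (∑ j ∈ Finset.range (N+1), mEnt N i j * pEnt j k)
      = ∑ j ∈ Finset.range (N+2), mEnt N i j * pEnt j k := by
    rw [Finset.sum_range_succ (fun j => mEnt N i j * pEnt j k) (N+1)]
    have : pEnt (N+1) k = 0 := by
      simp [pEnt, Nat.choose_eq_zero_of_lt (Nat.lt_succ_of_le hik)]
    simp [this]
  have hR : (∑ j ∈ Finset.range (N+1), pEnt (i : ℕ) j * sEnt N j k)
      = ∑ j ∈ Finset.range (N+2), pEnt (i : ℕ) j * sEnt N j k := by
    rw [Finset.sum_range_succ (fun j => pEnt (i : ℕ) j * sEnt N j k) (N+1)]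
    have : sEnt N (N+1) k = 0 := by
      unfold sEnt
      rcases eq_or_ne ((k : ℕ)) N with h | h
      · simp [h]
      · rw [if_neg (by omega)]
    simp [this]
  rw [hL, hR]
  -- compute RHS: single term at j = k+1
  have hRval : (∑ j ∈ Finset.range (N+2), pEnt (i : ℕ) j * sEnt N j k)
      = pEnt (i : ℕ) ((k : ℕ) + 1) * (((k : ℕ) : ℂ) - N) := by
    rw [Finset.sum_eq_single ((k : ℕ) + 1)]
    · simp [sEnt]
    · intro b _ hb
      have : sEnt N b k = 0 := by simp [sEnt, hb]
      simp [this]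
    · intro h
      exact absurd (Finset.mem_range.mpr (by omega)) h
  rw [hRval]
  -- split LHS
  have hLsplit : (∑ j ∈ Finset.range (N+2), mEnt N i j * pEnt j k)
      = (∑ j ∈ Finset.range (N+2), (if j = (i : ℕ) + 1 then (j : ℂ) else 0) * pEnt j k)
      + (∑ j ∈ Finset.range (N+2), (if j = (i : ℕ) then (N : ℂ) - 2 * i else 0) * pEnt j k)
      + (∑ j ∈ Finset.range (N+2), (if (i : ℕ) = j + 1 then ((i : ℕ) : ℂ) - 1 - N else 0) * pEnt j k) := by
    rw [← Finset.sum_add_distrib, ← Finset.sum_add_distrib]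
    refine Finset.sum_congr rfl fun j _ => ?_
    rw [mEnt_split]
    ring
  rw [hLsplit]
  have h1 : (∑ j ∈ Finset.range (N+2), (if j = (i : ℕ) + 1 then (j : ℂ) else 0) * pEnt j k)
      = (((i : ℕ) : ℂ) + 1) * pEnt ((i : ℕ) + 1) k := by
    rw [Finset.sum_eq_single ((i : ℕ) + 1)]
    · push_cast; simp
    · intro b _ hb; simp [hb]
    · intro h; exact absurd (Finset.mem_range.mpr (by omega)) h
  have h2 : (∑ j ∈ Finset.range (N+2), (if j = (i : ℕ) then (N : ℂ) - 2 * i else 0) * pEnt j k)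
      = ((N : ℂ) - 2 * i) * pEnt (i : ℕ) k := by
    rw [Finset.sum_eq_single ((i : ℕ))]
    · simp
    · intro b _ hb; simp [hb]
    · intro h; exact absurd (Finset.mem_range.mpr (by omega)) h
  rw [h1, h2]
  -- case on i
  rcases hizero : (i : ℕ) with _ | m
  · have h3 : (∑ j ∈ Finset.range (N+2), (if (0 : ℕ) = j + 1 then ((0 : ℕ) : ℂ) - 1 - N else 0) * pEnt j k) = 0 := by
      refine Finset.sum_eq_zero fun j _ => ?_
      rw [if_neg (by omega), zero_mul]
    rw [h3]
    unfold pEnt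
    have h4 : ((k : ℕ)).choose (0 + 1) = (k : ℕ) := Nat.choose_one_right _
    rw [h4, Nat.choose_zero_right, Nat.choose_zero_right]
    push_cast
    ring
  · have h3 : (∑ j ∈ Finset.range (N+2), (if m + 1 = j + 1 then ((m + 1 : ℕ) : ℂ) - 1 - N else 0) * pEnt j k)
        = (((m : ℕ) : ℂ) - N) * pEnt m k := by
      rw [Finset.sum_eq_single m]
      · push_cast; rw [if_pos rfl]; ring
      · intro b _ hb; rw [if_neg (by omega), zero_mul]
      · intro h; exact absurd (Finset.mem_range.mpr (by omega)) h
    rw [h3]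
    unfold pEnt
    have hkey := key N (k : ℕ) m
    push_cast at hkey ⊢
    linear_combination ((-1 : ℂ) ^ m * (-1 : ℂ) ^ (k : ℕ)) * hkey

lemma smat_pow_apply (N p : ℕ) : ∀ i j : Fin (N + 1), (i : ℕ) < (j : ℕ) + p →
    (Smat N ^ p) i j = 0 := by
  induction p with
  | zero =>
    intro i j h
    rw [pow_zero]
    exact Matrix.one_apply_ne (by rintro rfl; omega)
  | succ p ih =>
    intro i j h
    rw [pow_succ, Matrix.mul_apply]
    refine Finset.sum_eq_zero fun t _ => ?_
    rcases eq_or_ne ((t : ℕ)) ((j : ℕ) + 1) with ht | ht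
    · rw [ih i t (by omega), zero_mul]
    · have : Smat N t j = 0 := by simp [Smat, sEnt, ht]
      rw [this, mul_zero]

lemma smat_pow_eq_zero (N : ℕ) : Smat N ^ (N + 1) = 0 := by
  funext i j
  exact smat_pow_apply N (N + 1) i j (by omega)

lemma pmat_det (N : ℕ) : (Pmat N).det = 1 := by
  have h : (Pmat N).BlockTriangular id := by
    intro i j hij
    have hij' : (j : ℕ) < (i : ℕ) := hij
    simp only [Pmat, pEnt]
    rw [Nat.choose_eq_zero_of_lt hij']
    simp
  rw [Matrix.det_of_upperTriangular h]
  have : ∀ i : Fin (N + 1), Pmat N i i = 1 := by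
    intro i
    simp [Pmat, pEnt, ← two_mul, pow_mul]
  simp [this]

lemma conj_pow {n : ℕ} (P A B : Matrix (Fin n) (Fin n) ℂ)
    (h : A * P = P * B) (m : ℕ) : A ^ m * P = P * B ^ m := by
  induction m with
  | zero => simp
  | succ m ih =>
    rw [pow_succ, pow_succ, mul_assoc, h, ← mul_assoc, ih, mul_assoc]

lemma nminus_eq (ℓ : ℕ) : NminusMat ℓ = (Complex.I / 2) • Mmat (2 * ℓ) := by
  funext i j
  simp only [NminusMat, Mmat, mEnt, Matrix.smul_apply, smul_eq_mul]
  have e1 : ((i : ℤ) - ℓ = (j : ℤ) - ℓ - 1) ↔ ((j : ℕ) = (i : ℕ) + 1) := by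
    constructor <;> intro h <;> omega
  have e2 : ((i : ℤ) - ℓ = (j : ℤ) - ℓ) ↔ ((i : ℕ) = (j : ℕ)) := by
    constructor <;> intro h <;> omega
  have e3 : ((i : ℤ) - ℓ = (j : ℤ) - ℓ + 1) ↔ ((i : ℕ) = (j : ℕ) + 1) := by
    constructor <;> intro h <;> omega
  by_cases h1 : (j : ℕ) = (i : ℕ) + 1
  · rw [if_pos (e1.mpr h1), if_pos h1]
    push_cast
    ring
  · rw [if_neg (fun hh => h1 (e1.mp hh)), if_neg h1]
    by_cases h2 : (i : ℕ) = (j : ℕ)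
    · rw [if_pos (e2.mpr h2), if_pos h2]
      push_cast
      rw [h2]
      ring
    · rw [if_neg (fun hh => h2 (e2.mp hh)), if_neg h2]
      by_cases h3 : (i : ℕ) = (j : ℕ) + 1
      · rw [if_pos (e3.mpr h3), if_pos h3]
        have hcast : ((i : ℕ) : ℂ) = ((j : ℕ) : ℂ) + 1 := by
          exact_mod_cast congrArg (Nat.cast (R := ℂ)) h3
        push_cast
        rw [hcast]
        ring
      · rw [if_neg (fun hh => h3 (e3.mp hh)), if_neg h3, mul_zero]

end Stmt10Aux

open Stmt10Aux in
/-- the matrix `N` of the generator `N₋` on `V_ℓ⁰` is nilpotent: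
`N^(2ℓ+1) = 0`. -/
theorem stmt10 (ℓ : ℕ) : NminusMat ℓ ^ (2 * ℓ + 1) = 0 := by
  set N : ℕ := 2 * ℓ with hN
  have hmain : NminusMat ℓ * Pmat N = Pmat N * ((Complex.I / 2) • Smat N) := by
    rw [nminus_eq, Matrix.smul_mul, main_identity, Matrix.mul_smul]
  have hpow : NminusMat ℓ ^ (N + 1) * Pmat N
      = Pmat N * ((Complex.I / 2) • Smat N) ^ (N + 1) :=
    conj_pow (Pmat N) (NminusMat ℓ) ((Complex.I / 2) • Smat N) hmain (N + 1)
  have hzero : ((Complex.I / 2) • Smat N) ^ (N + 1) = 0 := by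
    rw [smul_pow, smat_pow_eq_zero, smul_zero]
  rw [hzero, Matrix.mul_zero] at hpow
  have hdet : IsUnit (Pmat N).det := by rw [pmat_det]; exact isUnit_one
  calc NminusMat ℓ ^ (2 * ℓ + 1)
      = NminusMat ℓ ^ (N + 1) * (Pmat N * (Pmat N)⁻¹) := by
        rw [Matrix.mul_nonsing_inv _ hdet, Matrix.mul_one]
    _ = (NminusMat ℓ ^ (N + 1) * Pmat N) * (Pmat N)⁻¹ := by rw [Matrix.mul_assoc]
    _ = 0 := by rw [hpow, Matrix.zero_mul]

end
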